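/- Let Z_1, Z_2, … be i.i.d. standard normal random variables and for p ≥ 2 let V₁(p) and V₂(p) denote the largest and second largest values among |Z_1|, …, |Z_p|. Then the covariance test statistic T₁(p) = V₁(p) · (V₁(p) − V₂(p)) converges in distribution to the standard exponential distribution as p → ∞; that is, for every t ≥ 0, ℙ( V₁(p)(V₁(p) − V₂(p)) > t ) → e^{−t}. -/

import Mathlib

/-!
Write `h(v) = v - t / v`, so that `v (v - u) > t ↔ u < h(v)` for `v > 0`. The event
`T₁(p) > t` is the disjoint union over `i` of the events "`|Z_i| > √t` and `|Z_j| < h(|Z_i|)`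
for every `j ≠ i`", so by independence and symmetry, with `F(c) = P(|N| < c) = 2∫₀ᶜ φ`,
`P(T₁(p) > t) = ∫_{√t}^∞ p F(h v)^{p-1} 2φ(v) dv`.
Since `φ(v) = φ(h v) e^{-t + t²/(2v²)}` and `h'(v) = 1 + t/v²`, the integrand is
`f_p(v) r(v)`, where `f_p = ((F ∘ h)^p)'` is a probability density on `(√t, ∞)` whose mass
`F(h V)^p` on `(√t, V]` tends to `0`, and `r(v) = e^{-t + t²/(2v²)} / (1 + t/v²)` is bounded
with `r(v) → e^{-t}`. So the mass of `f_p` escapes to infinity, where `r` is close to `e^{-t}`.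
-/

open MeasureTheory ProbabilityTheory Filter Real

/-- The largest of the values `|x 0|, …, |x (p-1)|`. -/
noncomputable def V1 (p : ℕ) (x : ℕ → ℝ) : ℝ :=
  ⨆ i : Fin p, |x i|

/-- The second largest of the values `|x 0|, …, |x (p-1)|` (counted with multiplicity),
realized as the maximum over distinct pairs of the minimum of the pair. -/
noncomputable def V2 (p : ℕ) (x : ℕ → ℝ) : ℝ :=
  ⨆ i : Fin p, ⨆ j : Fin p, ⨆ _ : i ≠ j, min |x i| |x j|

open Set Topology

local notation "φ" => gaussianPDFReal 0 1

section HalfNormal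

lemma gaussianPDFReal_zero_one_eq (x : ℝ) : φ x = (√(2 * π))⁻¹ * exp (-x ^ 2 / 2) := by
  simp [gaussianPDFReal]

lemma continuous_gaussianPDFReal_zero_one : Continuous φ := by
  simp only [funext gaussianPDFReal_zero_one_eq]
  fun_prop

lemma gaussianPDFReal_zero_one_abs (x : ℝ) : φ |x| = φ x := by
  simp [gaussianPDFReal_zero_one_eq]

lemma integral_Ioi_zero_gaussianPDFReal_zero_one : ∫ x in Ioi (0 : ℝ), φ x = 1 / 2 := by
  have h := integral_comp_abs (f := φ)
  simp only [gaussianPDFReal_zero_one_abs, integral_gaussianPDFReal_eq_one 0 one_ne_zero] at h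
  linarith

noncomputable def halfNormalCDF (c : ℝ) : ℝ := 2 * ∫ s in (0 : ℝ)..c, φ s

lemma halfNormalCDF_zero : halfNormalCDF 0 = 0 := by simp [halfNormalCDF]

lemma hasDerivAt_halfNormalCDF (x : ℝ) : HasDerivAt halfNormalCDF (2 * φ x) x :=
  (continuous_gaussianPDFReal_zero_one.integral_hasStrictDerivAt 0 x).hasDerivAt.const_mul 2

lemma continuous_halfNormalCDF : Continuous halfNormalCDF :=
  continuous_iff_continuousAt.2 fun x => (hasDerivAt_halfNormalCDF x).continuousAt

lemma strictMono_halfNormalCDF : StrictMono halfNormalCDF :=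
  strictMono_of_deriv_pos fun x => by
    rw [(hasDerivAt_halfNormalCDF x).deriv]
    exact mul_pos two_pos (gaussianPDFReal_pos 0 1 x one_ne_zero)

lemma tendsto_halfNormalCDF_atTop : Tendsto halfNormalCDF atTop (𝓝 1) := by
  have h := intervalIntegral_tendsto_integral_Ioi 0
    (integrable_gaussianPDFReal 0 1).integrableOn tendsto_id
  rw [integral_Ioi_zero_gaussianPDFReal_zero_one] at h
  convert h.const_mul 2 using 2 <;> simp [halfNormalCDF]

lemma halfNormalCDF_nonneg {x : ℝ} (hx : 0 ≤ x) : 0 ≤ halfNormalCDF x :=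
  halfNormalCDF_zero ▸ strictMono_halfNormalCDF.monotone hx

lemma halfNormalCDF_lt_one (x : ℝ) : halfNormalCDF x < 1 :=
  (strictMono_halfNormalCDF (lt_add_one x)).trans_le
    (strictMono_halfNormalCDF.monotone.ge_of_tendsto tendsto_halfNormalCDF_atTop _)

lemma gaussianReal_abs_lt {c : ℝ} (hc : 0 ≤ c) :
    gaussianReal 0 1 {u | |u| < c} = ENNReal.ofReal (halfNormalCDF c) := by
  have hset : {u : ℝ | |u| < c} = Ioo (-c) c := by ext u; simp [abs_lt]
  have hsymm : ∫ u in (-c)..0, φ u = ∫ u in (0 : ℝ)..c, φ u := by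
    simpa [gaussianPDFReal_zero_one_abs] using
      (intervalIntegral.integral_comp_neg (a := 0) (b := c) (fun u => φ |u|)).symm
  rw [hset, gaussianReal_apply_eq_integral 0 one_ne_zero, ← integral_Ioc_eq_integral_Ioo,
    ← intervalIntegral.integral_of_le (by linarith),
    ← intervalIntegral.integral_add_adjacent_intervals (b := 0)
      (continuous_gaussianPDFReal_zero_one.intervalIntegrable _ _)
      (continuous_gaussianPDFReal_zero_one.intervalIntegrable _ _), hsymm, halfNormalCDF, two_mul]

end HalfNormal

section Threshold

variable {t : ℝ}

noncomputable def gapThreshold (t v : ℝ) : ℝ := v - t / v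

lemma lt_mul_sub_iff_lt_gapThreshold {u v : ℝ} (hv : 0 < v) :
    t < v * (v - u) ↔ u < gapThreshold t v := by
  rw [gapThreshold, lt_sub_comm, div_lt_iff₀ hv, mul_comm]

lemma gapThreshold_sqrt : gapThreshold t √t = 0 := by
  simp [gapThreshold, Real.div_sqrt]

lemma gapThreshold_pos {v : ℝ} (hv : √t < v) : 0 < gapThreshold t v := by
  have hv0 : 0 < v := (sqrt_nonneg t).trans_lt hv
  rw [← lt_mul_sub_iff_lt_gapThreshold hv0, sub_zero, ← sq]
  exact (sqrt_lt' hv0).1 hv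

lemma gapThreshold_le (ht : 0 ≤ t) {v : ℝ} (hv : 0 < v) : gapThreshold t v ≤ v :=
  sub_le_self _ (div_nonneg ht hv.le)

lemma hasDerivAt_gapThreshold {v : ℝ} (hv : v ≠ 0) :
    HasDerivAt (gapThreshold t) (1 + t / v ^ 2) v := by
  have h : HasDerivAt (fun u => u - t * u⁻¹) (1 - t * -(v ^ 2)⁻¹) v :=
    (hasDerivAt_id' v).sub ((hasDerivAt_inv hv).const_mul t)
  convert h using 1
  · ext u; simp [gapThreshold, div_eq_mul_inv]
  · ring

lemma continuousWithinAt_gapThreshold_sqrt (ht : 0 ≤ t) :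
    ContinuousWithinAt (gapThreshold t) (Ici √t) √t := by
  rcases ht.eq_or_lt with rfl | ht'
  · have : gapThreshold 0 = id := by ext v; simp [gapThreshold]
    exact this ▸ continuousWithinAt_id
  · exact (hasDerivAt_gapThreshold (sqrt_pos.2 ht').ne').continuousAt.continuousWithinAt

lemma tendsto_gapThreshold_atTop : Tendsto (gapThreshold t) atTop atTop :=
  (tendsto_id.atTop_add ((tendsto_const_nhds (x := t)).div_atTop tendsto_id).neg).congr
    fun v => by simp [gapThreshold, sub_eq_add_neg]

@[fun_prop]
lemma measurable_gapThreshold : Measurable (gapThreshold t) := by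
  unfold gapThreshold; fun_prop

end Threshold

section DensityRatio

variable {t : ℝ}

noncomputable def densityRatio (t v : ℝ) : ℝ := exp (-t + t ^ 2 / (2 * v ^ 2)) / (1 + t / v ^ 2)

lemma gaussianPDFReal_eq_mul_gapThreshold {v : ℝ} (hv : v ≠ 0) :
    φ v = φ (gapThreshold t v) * exp (-t + t ^ 2 / (2 * v ^ 2)) := by
  rw [gaussianPDFReal_zero_one_eq, gaussianPDFReal_zero_one_eq, mul_assoc, ← exp_add,
    gapThreshold]
  congr 2
  field_simp
  ring

lemma densityRatio_pos (ht : 0 ≤ t) (v : ℝ) : 0 < densityRatio t v :=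
  div_pos (exp_pos _) (by positivity)

lemma densityRatio_le_one (ht : 0 ≤ t) {v : ℝ} (hv : √t < v) : densityRatio t v ≤ 1 := by
  have hv0 : 0 < v := (sqrt_nonneg t).trans_lt hv
  have htv : t < v ^ 2 := (sqrt_lt' hv0).1 hv
  have hexp : exp (-t + t ^ 2 / (2 * v ^ 2)) ≤ 1 := by
    rw [exp_le_one_iff, neg_add_le_iff_le_add, add_zero, div_le_iff₀ (by positivity)]
    nlinarith
  rw [densityRatio, div_le_one (by positivity)]
  linarith [div_nonneg ht (sq_nonneg v)]

lemma tendsto_densityRatio_atTop : Tendsto (densityRatio t) atTop (𝓝 (exp (-t))) := by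
  have hinv : Tendsto (fun v : ℝ => (v ^ 2)⁻¹) atTop (𝓝 0) :=
    tendsto_inv_atTop_zero.comp (tendsto_pow_atTop two_ne_zero)
  have hnum := ((hinv.const_mul (t ^ 2 / 2)).const_add (-t)).rexp
  have hden := (hinv.const_mul t).const_add 1
  simp only [mul_zero, add_zero] at hnum hden
  refine (div_one (exp (-t)) ▸ hnum.div hden one_ne_zero).congr fun v => ?_
  simp only [Pi.div_apply, densityRatio]
  ring_nf

end DensityRatio

section MassEscape

variable {a L C : ℝ} {r : ℝ → ℝ}

lemma abs_setIntegral_mul_sub_le {f : ℝ → ℝ} {V δ : ℝ} (haV : a ≤ V)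
    (hf_nonneg : ∀ v ∈ Ioi a, 0 ≤ f v) (hf_int : IntegrableOn f (Ioi a))
    (hf_one : ∫ v in Ioi a, f v = 1) (hr : AEStronglyMeasurable r (volume.restrict (Ioi a)))
    (hC : ∀ v ∈ Ioi a, |r v - L| ≤ C) (hδ : ∀ v ∈ Ioi V, |r v - L| ≤ δ) (hδ0 : 0 ≤ δ) :
    |(∫ v in Ioi a, f v * r v) - L| ≤ C * (∫ v in Ioc a V, f v) + δ := by
  have hC_ae : ∀ᵐ v ∂(volume.restrict (Ioi a)), ‖r v - L‖ ≤ C :=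
    (ae_restrict_iff' measurableSet_Ioi).2 (ae_of_all _ hC)
  have hfr : IntegrableOn (fun v => f v * (r v - L)) (Ioi a) :=
    hf_int.mul_bdd (hr.sub aestronglyMeasurable_const) hC_ae
  have hg : IntegrableOn (fun v => f v * |r v - L|) (Ioi a) :=
    hf_int.mul_bdd (hr.sub aestronglyMeasurable_const).norm (by simpa using hC_ae)
  have hIoi : Ioi V ⊆ Ioi a := Ioi_subset_Ioi haV
  have hfr_eq : ∫ v in Ioi a, f v * r v = (∫ v in Ioi a, f v * (r v - L)) + L := by
    calc ∫ v in Ioi a, f v * r v = ∫ v in Ioi a, (f v * (r v - L) + L * f v) := by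
          congr 1; ext v; ring
      _ = _ := by
        rw [integral_add hfr (hf_int.const_mul L), integral_const_mul, hf_one, mul_one]
  have htail : ∫ v in Ioi V, f v ≤ 1 :=
    hf_one ▸ setIntegral_mono_set hf_int ((ae_restrict_iff' measurableSet_Ioi).2
      (ae_of_all _ hf_nonneg)) hIoi.eventuallyLE
  calc |(∫ v in Ioi a, f v * r v) - L|
      ≤ ∫ v in Ioi a, f v * |r v - L| := by
        rw [hfr_eq, add_sub_cancel_right, ← Real.norm_eq_abs]
        refine norm_integral_le_of_norm_le hg ((ae_restrict_iff' measurableSet_Ioi).2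
          (ae_of_all _ fun v hv => ?_))
        rw [norm_mul, Real.norm_of_nonneg (hf_nonneg v hv), Real.norm_eq_abs]
    _ = (∫ v in Ioc a V, f v * |r v - L|) + ∫ v in Ioi V, f v * |r v - L| := by
        rw [← setIntegral_union Ioc_disjoint_Ioi_same measurableSet_Ioi
          (hg.mono_set Ioc_subset_Ioi_self) (hg.mono_set hIoi), Ioc_union_Ioi_eq_Ioi haV]
    _ ≤ (∫ v in Ioc a V, C * f v) + ∫ v in Ioi V, δ * f v := by
        gcongr ?_ + ?_
        · refine setIntegral_mono_on (hg.mono_set Ioc_subset_Ioi_self)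
            ((hf_int.mono_set Ioc_subset_Ioi_self).const_mul C) measurableSet_Ioc fun v hv => ?_
          rw [mul_comm C]
          exact mul_le_mul_of_nonneg_left (hC v hv.1) (hf_nonneg v hv.1)
        · refine setIntegral_mono_on (hg.mono_set hIoi) ((hf_int.mono_set hIoi).const_mul δ)
            measurableSet_Ioi fun v hv => ?_
          rw [mul_comm δ]
          exact mul_le_mul_of_nonneg_left (hδ v hv) (hf_nonneg v (hIoi hv))
    _ ≤ C * (∫ v in Ioc a V, f v) + δ := by
        rw [integral_const_mul, integral_const_mul]
        nlinarith

theorem tendsto_setIntegral_mul_of_mass_escapes {f : ℕ → ℝ → ℝ}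
    (hf_nonneg : ∀ q, ∀ v ∈ Ioi a, 0 ≤ f q v) (hf_int : ∀ q, IntegrableOn (f q) (Ioi a))
    (hf_one : ∀ q, ∫ v in Ioi a, f q v = 1)
    (hescape : ∀ V, Tendsto (fun q => ∫ v in Ioc a V, f q v) atTop (𝓝 0))
    (hr_meas : AEStronglyMeasurable r (volume.restrict (Ioi a)))
    (hC : ∀ v ∈ Ioi a, |r v - L| ≤ C) (hr : Tendsto r atTop (𝓝 L)) :
    Tendsto (fun q => ∫ v in Ioi a, f q v * r v) atTop (𝓝 L) := by
  refine Metric.tendsto_nhds.2 fun ε hε => ?_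
  obtain ⟨V₀, hV₀⟩ := Metric.tendsto_atTop.1 hr (ε / 2) (half_pos hε)
  have hδ : ∀ v ∈ Ioi (max a V₀), |r v - L| ≤ ε / 2 :=
    fun v hv => (hV₀ v ((le_max_right a V₀).trans (le_of_lt hv))).le
  have hsmall : ∀ᶠ q in atTop, C * ∫ v in Ioc a (max a V₀), f q v < ε / 2 :=
    (mul_zero C ▸ (hescape _).const_mul C).eventually (gt_mem_nhds (half_pos hε))
  filter_upwards [hsmall] with q hq
  have := abs_setIntegral_mul_sub_le (le_max_left a V₀) (hf_nonneg q) (hf_int q) (hf_one q)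
    hr_meas hC hδ (half_pos hε).le
  rw [Real.dist_eq]
  linarith

end MassEscape

section PowDensity

variable {a : ℝ} {G g : ℝ → ℝ}

lemma hasDerivAt_pow_succ {v g' : ℝ} (q : ℕ) (h : HasDerivAt G g' v) :
    HasDerivAt (fun x => G x ^ (q + 1)) ((q + 1) * G v ^ q * g') v := by
  have := h.pow (q + 1)
  simp only [Nat.cast_add, Nat.cast_one, add_tsub_cancel_right] at this
  exact this

lemma pow_mul_deriv_nonneg (hg : ∀ v ∈ Ioi a, 0 ≤ g v) (hG_nonneg : ∀ v ∈ Ioi a, 0 ≤ G v)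
    (q : ℕ) : ∀ v ∈ Ioi a, 0 ≤ (q + 1) * G v ^ q * g v :=
  fun v hv => by have := hG_nonneg v hv; have := hg v hv; positivity

lemma integrableOn_Ioi_pow_mul_deriv (hG_cont : ContinuousWithinAt G (Ici a) a)
    (hG : ∀ v ∈ Ioi a, HasDerivAt G (g v) v) (hg : ∀ v ∈ Ioi a, 0 ≤ g v)
    (hG_nonneg : ∀ v ∈ Ioi a, 0 ≤ G v) (hG_top : Tendsto G atTop (𝓝 1)) (q : ℕ) :
    IntegrableOn (fun v => (q + 1) * G v ^ q * g v) (Ioi a) :=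
  integrableOn_Ioi_deriv_of_nonneg (g := fun x => G x ^ (q + 1)) (hG_cont.pow (q + 1))
    (fun v hv => hasDerivAt_pow_succ q (hG v hv)) (pow_mul_deriv_nonneg hg hG_nonneg q)
    (by simpa using hG_top.pow (q + 1))

lemma integral_Ioi_pow_mul_deriv (hG_cont : ContinuousWithinAt G (Ici a) a)
    (hG : ∀ v ∈ Ioi a, HasDerivAt G (g v) v) (hg : ∀ v ∈ Ioi a, 0 ≤ g v)
    (hG_nonneg : ∀ v ∈ Ioi a, 0 ≤ G v) (hGa : G a = 0) (hG_top : Tendsto G atTop (𝓝 1))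
    (q : ℕ) : ∫ v in Ioi a, (q + 1) * G v ^ q * g v = 1 := by
  rw [integral_Ioi_of_hasDerivAt_of_nonneg (g := fun x => G x ^ (q + 1)) (hG_cont.pow (q + 1))
    (fun v hv => hasDerivAt_pow_succ q (hG v hv)) (pow_mul_deriv_nonneg hg hG_nonneg q)
    (by simpa using hG_top.pow (q + 1)), hGa]
  simp

lemma integral_Ioc_pow_mul_deriv (hG_cont : ContinuousWithinAt G (Ici a) a)
    (hG : ∀ v ∈ Ioi a, HasDerivAt G (g v) v) (hg : ∀ v ∈ Ioi a, 0 ≤ g v)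
    (hG_nonneg : ∀ v ∈ Ioi a, 0 ≤ G v) (hGa : G a = 0) (q : ℕ) {V : ℝ} (hV : a ≤ V) :
    ∫ v in Ioc a V, (q + 1) * G v ^ q * g v = G V ^ (q + 1) := by
  have hcont : ContinuousOn (fun x => G x ^ (q + 1)) (Icc a V) := by
    refine ContinuousOn.pow (fun x hx => ?_) _
    rcases hx.1.eq_or_lt with rfl | hlt
    · exact hG_cont.mono Icc_subset_Ici_self
    · exact (hG x hlt).continuousAt.continuousWithinAt
  have hderiv :
      ∀ x ∈ Ioo a V, HasDerivAt (fun x => G x ^ (q + 1)) ((q + 1) * G x ^ q * g x) x :=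
    fun x hx => hasDerivAt_pow_succ q (hG x hx.1)
  have hint := intervalIntegral.integrableOn_deriv_of_nonneg hcont hderiv
    fun x hx => pow_mul_deriv_nonneg hg hG_nonneg q x hx.1
  rw [← intervalIntegral.integral_of_le hV, intervalIntegral.integral_eq_sub_of_hasDerivAt_of_le
    hV hcont hderiv ((intervalIntegrable_iff_integrableOn_Ioc_of_le hV).2 hint), hGa]
  simp

lemma tendsto_integral_Ioc_pow_mul_deriv (hG_cont : ContinuousWithinAt G (Ici a) a)
    (hG : ∀ v ∈ Ioi a, HasDerivAt G (g v) v) (hg : ∀ v ∈ Ioi a, 0 ≤ g v)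
    (hG_nonneg : ∀ v ∈ Ioi a, 0 ≤ G v) (hG_lt : ∀ v ∈ Ioi a, G v < 1) (hGa : G a = 0)
    (V : ℝ) :
    Tendsto (fun q : ℕ => ∫ v in Ioc a V, (q + 1) * G v ^ q * g v) atTop (𝓝 0) := by
  rcases le_or_gt V a with hV | hV
  · simp [Ioc_eq_empty_of_le hV]
  · simp_rw [integral_Ioc_pow_mul_deriv hG_cont hG hg hG_nonneg hGa _ hV.le]
    exact (tendsto_pow_atTop_nhds_zero_of_lt_one (hG_nonneg V hV) (hG_lt V hV)).comp
      (tendsto_add_atTop_nat 1)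

end PowDensity

lemma tendsto_integral_halfNormalCDF_pow {t : ℝ} (ht : 0 ≤ t) :
    Tendsto (fun n : ℕ => ∫ v in Ioi √t,
        (n + 1) * halfNormalCDF (gapThreshold t v) ^ n * (2 * φ v))
      atTop (𝓝 (exp (-t))) := by
  set G := fun v => halfNormalCDF (gapThreshold t v)
  set g := fun v => 2 * φ (gapThreshold t v) * (1 + t / v ^ 2)
  have hpos : ∀ {v}, v ∈ Ioi √t → 0 < v := fun hv => (sqrt_nonneg t).trans_lt hv
  have hG : ∀ v ∈ Ioi √t, HasDerivAt G (g v) v := fun v hv =>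
    (hasDerivAt_halfNormalCDF _).comp v (hasDerivAt_gapThreshold (hpos hv).ne')
  have hG_cont : ContinuousWithinAt G (Ici √t) √t :=
    continuous_halfNormalCDF.continuousAt.comp_continuousWithinAt
      (continuousWithinAt_gapThreshold_sqrt ht)
  have hg : ∀ v ∈ Ioi √t, 0 ≤ g v := fun v _ => by
    have := gaussianPDFReal_nonneg 0 1 (gapThreshold t v); positivity
  have hG_nonneg : ∀ v ∈ Ioi √t, 0 ≤ G v := fun v hv =>
    halfNormalCDF_nonneg (gapThreshold_pos hv).le
  have hGa : G √t = 0 := by simp [G, gapThreshold_sqrt, halfNormalCDF_zero]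
  have hG_top : Tendsto G atTop (𝓝 1) :=
    tendsto_halfNormalCDF_atTop.comp tendsto_gapThreshold_atTop
  have hC : ∀ v ∈ Ioi √t, |densityRatio t v - exp (-t)| ≤ 1 := fun v hv => by
    have := densityRatio_pos ht v
    have := densityRatio_le_one ht hv
    have := exp_pos (-t)
    have := exp_le_one_iff.2 (neg_nonpos.2 ht)
    rw [abs_le]; constructor <;> linarith
  refine (tendsto_setIntegral_mul_of_mass_escapes
    (pow_mul_deriv_nonneg hg hG_nonneg)
    (integrableOn_Ioi_pow_mul_deriv hG_cont hG hg hG_nonneg hG_top)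
    (integral_Ioi_pow_mul_deriv hG_cont hG hg hG_nonneg hGa hG_top)
    (tendsto_integral_Ioc_pow_mul_deriv hG_cont hG hg hG_nonneg
      (fun v _ => halfNormalCDF_lt_one _) hGa)
    (Measurable.aestronglyMeasurable (by unfold densityRatio; fun_prop)) hC
    tendsto_densityRatio_atTop).congr fun n =>
      setIntegral_congr_fun measurableSet_Ioi fun v hv => ?_
  have : 0 < 1 + t / v ^ 2 := by have := hpos hv; positivity
  simp only [G, g, densityRatio, gaussianPDFReal_eq_mul_gapThreshold (t := t) (hpos hv).ne']
  field_simp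

section OrderStatistics

variable {p : ℕ} {x : ℕ → ℝ}

lemma abs_le_V1 (i : Fin p) : |x i| ≤ V1 p x :=
  le_ciSup (f := fun j : Fin p => |x j|) (Set.finite_range _).bddAbove i

lemma V1_eq_of_forall_le {i : Fin p} (hi : ∀ j : Fin p, |x j| ≤ |x i|) : V1 p x = |x i| :=
  le_antisymm (Real.iSup_le hi (abs_nonneg _)) (abs_le_V1 i)

lemma min_le_V2 {i j : Fin p} (hij : i ≠ j) : min |x i| |x j| ≤ V2 p x :=
  calc min |x i| |x j| = ⨆ _ : i ≠ j, min |x i| |x j| :=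
        (ciSup_pos (f := fun _ => min |x i| |x j|) hij).symm
    _ ≤ ⨆ j' : Fin p, ⨆ _ : i ≠ j', min |x i| |x j'| :=
      le_ciSup (f := fun j' : Fin p => ⨆ _ : i ≠ j', min |x i| |x j'|)
        (Set.finite_range _).bddAbove j
    _ ≤ V2 p x := le_ciSup (f := fun i' : Fin p => ⨆ j' : Fin p, ⨆ _ : i' ≠ j', min |x i'| |x j'|)
        (Set.finite_range _).bddAbove i

lemma V2_le {c : ℝ} (hc : 0 ≤ c) (h : ∀ i j : Fin p, i ≠ j → min |x i| |x j| ≤ c) :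
    V2 p x ≤ c :=
  Real.iSup_le (fun i => Real.iSup_le (fun j => Real.iSup_le (h i j) hc) hc) hc

lemma V2_nonneg : 0 ≤ V2 p x :=
  Real.iSup_nonneg fun _ => Real.iSup_nonneg fun _ => Real.iSup_nonneg fun _ =>
    le_min (abs_nonneg _) (abs_nonneg _)

lemma V2_lt_iff_of_forall_le {i : Fin p} (hi : ∀ j : Fin p, |x j| ≤ |x i|) {c : ℝ} (hc : 0 < c) :
    V2 p x < c ↔ ∀ j, j ≠ i → |x j| < c := by
  refine ⟨fun h j hj => ?_, fun h => ?_⟩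
  · exact (min_eq_right (hi j) ▸ min_le_V2 hj.symm).trans_lt h
  · set y : Fin p → ℝ := fun j => if j = i then 0 else |x j|
    have : Nonempty (Fin p) := ⟨i⟩
    obtain ⟨j₀, hj₀⟩ := Finite.exists_max y
    have hy : ∀ j, j ≠ i → |x j| ≤ y j₀ := fun j hj => by simpa [y, hj] using hj₀ j
    refine (V2_le ((by simp [y] : 0 ≤ y i).trans (hj₀ i)) fun a b hab => ?_).trans_lt ?_
    · rcases eq_or_ne a i with rfl | ha
      · exact (min_le_right _ _).trans (hy b hab.symm)
      · exact (min_le_left _ _).trans (hy a ha)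
    · by_cases hj : j₀ = i
      · simpa [y, hj] using hc
      · simpa [y, hj] using h j₀ hj

lemma lt_V1_mul_sub_V2_iff {t : ℝ} (ht : 0 ≤ t) :
    t < V1 p x * (V1 p x - V2 p x) ↔
      ∃ i : Fin p, √t < |x i| ∧ ∀ j, j ≠ i → |x j| < gapThreshold t |x i| := by
  constructor
  · intro h
    have : Nonempty (Fin p) := by
      refine Fin.pos_iff_nonempty.1 (Nat.pos_of_ne_zero fun hp => ?_)
      subst hp
      simp [V1] at h
      linarith
    obtain ⟨i, hi⟩ := Finite.exists_max fun j : Fin p => |x j|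
    rw [V1_eq_of_forall_le hi] at h
    have hxi : 0 < |x i| := by
      by_contra! h0
      nlinarith [abs_nonneg (x i), V2_nonneg (p := p) (x := x)]
    have hsqrt : √t < |x i| := (sqrt_lt' hxi).2 (by nlinarith [V2_nonneg (p := p) (x := x)])
    rw [lt_mul_sub_iff_lt_gapThreshold hxi, V2_lt_iff_of_forall_le hi (gapThreshold_pos hsqrt)] at h
    exact ⟨i, hsqrt, h⟩
  · rintro ⟨i, hsqrt, h⟩
    have hxi : 0 < |x i| := (sqrt_nonneg t).trans_lt hsqrt
    have hi : ∀ j : Fin p, |x j| ≤ |x i| := fun j => by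
      rcases eq_or_ne j i with rfl | hj
      · rfl
      · exact (h j hj).le.trans (gapThreshold_le ht hxi)
    rw [V1_eq_of_forall_le hi, lt_mul_sub_iff_lt_gapThreshold hxi,
      V2_lt_iff_of_forall_le hi (gapThreshold_pos hsqrt)]
    exact h

end OrderStatistics

lemma pi_setOf_forall_ne {α : Type*} [MeasurableSpace α] (γ : Measure α) [SigmaFinite γ]
    {n : ℕ} (i : Fin (n + 1)) {s : Set α} {R : Set (α × α)} (hs : MeasurableSet s)
    (hR : MeasurableSet R) :
    Measure.pi (fun _ : Fin (n + 1) => γ) {y | y i ∈ s ∧ ∀ j, j ≠ i → (y i, y j) ∈ R}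
      = ∫⁻ v in s, γ {u | (v, u) ∈ R} ^ n ∂γ := by
  set C : Set (α × (Fin n → α)) := {z | z.1 ∈ s ∧ ∀ j, (z.1, z.2 j) ∈ R}
  have hC : MeasurableSet C := by
    have : C = Prod.fst ⁻¹' s ∩ ⋂ j, (fun z : α × (Fin n → α) => (z.1, z.2 j)) ⁻¹' R := by
      ext; simp [C]
    rw [this]
    exact (measurable_fst hs).inter (.iInter fun j =>
      (measurable_fst.prodMk ((measurable_pi_apply j).comp measurable_snd)) hR)
  have hpre : MeasurableEquiv.piFinSuccAbove (fun _ => α) i ⁻¹' C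
      = {y | y i ∈ s ∧ ∀ j, j ≠ i → (y i, y j) ∈ R} := by
    ext y
    simp [C, Fin.removeNth, Fin.forall_iff_succAbove i, Fin.succAbove_ne]
  have hslice : ∀ v, Measure.pi (fun _ : Fin n => γ) (Prod.mk v ⁻¹' C)
      = s.indicator (fun v => γ {u | (v, u) ∈ R} ^ n) v := by
    intro v
    by_cases hv : v ∈ s
    · have : Prod.mk v ⁻¹' C = univ.pi fun _ => {u | (v, u) ∈ R} := by
        ext w; simp [C, hv, Set.mem_pi]
      simp [this, hv, Measure.pi_pi]
    · have : Prod.mk v ⁻¹' C = ∅ := by ext w; simp [C, hv]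
      simp [this, hv]
  rw [← hpre, (measurePreserving_piFinSuccAbove (fun _ => γ) i).measure_preimage
    hC.nullMeasurableSet, Measure.prod_apply hC, lintegral_congr hslice, lintegral_indicator hs]

lemma pi_gaussianReal_setOf_lt_gapThreshold {t : ℝ} {n : ℕ} (i : Fin (n + 1)) :
    Measure.pi (fun _ : Fin (n + 1) => gaussianReal 0 1)
        {y | √t < |y i| ∧ ∀ j, j ≠ i → |y j| < gapThreshold t |y i|}
      = ENNReal.ofReal (2 * ∫ v in Ioi √t, halfNormalCDF (gapThreshold t v) ^ n * φ v) := by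
  set s : Set ℝ := {v | √t < |v|}
  set k : ℝ → ℝ := fun v => halfNormalCDF (gapThreshold t |v|) ^ n
  have hs : MeasurableSet s := measurableSet_lt measurable_const measurable_abs
  have hk_meas : Measurable k :=
    (continuous_halfNormalCDF.measurable.comp
      (measurable_gapThreshold.comp measurable_abs)).pow_const n
  have hk_mem : ∀ v ∈ s, 0 ≤ k v ∧ k v ≤ 1 := fun v hv =>
    have h0 := halfNormalCDF_nonneg (gapThreshold_pos hv).le
    ⟨pow_nonneg h0 n, pow_le_one₀ h0 (halfNormalCDF_lt_one _).le⟩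
  have hslice : ∀ v ∈ s, gaussianReal 0 1 {u | |u| < gapThreshold t |v|} ^ n = .ofReal (k v) :=
    fun v hv => by
      rw [gaussianReal_abs_lt (gapThreshold_pos hv).le,
        ENNReal.ofReal_pow (halfNormalCDF_nonneg (gapThreshold_pos hv).le)]
  have hk_int : IntegrableOn k s (gaussianReal 0 1) :=
    (integrable_const 1).mono' hk_meas.aestronglyMeasurable ((ae_restrict_iff' hs).2
      (ae_of_all _ fun v hv => by
        rw [Real.norm_of_nonneg (hk_mem v hv).1]; exact (hk_mem v hv).2))
  have hR : MeasurableSet {z : ℝ × ℝ | |z.2| < gapThreshold t |z.1|} :=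
    measurableSet_lt (by fun_prop) (measurable_gapThreshold.comp measurable_fst.abs)
  refine ((pi_setOf_forall_ne _ i hs hR).trans (setLIntegral_congr_fun hs hslice)).trans ?_
  rw [← ofReal_integral_eq_lintegral_ofReal hk_int
    ((ae_restrict_iff' hs).2 (ae_of_all _ fun v hv => (hk_mem v hv).1))]
  congr 1
  calc ∫ v in s, k v ∂gaussianReal 0 1
      = ∫ v, φ v * s.indicator k v := by
        rw [← integral_indicator hs, integral_gaussianReal_eq_integral_smul one_ne_zero]
        rfl
    _ = ∫ v, (Ioi √t).indicator (fun w => halfNormalCDF (gapThreshold t w) ^ n * φ w) |v| := by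
        congr 1; ext v
        by_cases hv : v ∈ s
        · rw [indicator_of_mem hv, indicator_of_mem (show |v| ∈ Ioi √t from hv),
            gaussianPDFReal_zero_one_abs, mul_comm]
        · rw [indicator_of_notMem hv, indicator_of_notMem (show |v| ∉ Ioi √t from hv), mul_zero]
    _ = 2 * ∫ v in Ioi √t, halfNormalCDF (gapThreshold t v) ^ n * φ v := by
        rw [integral_comp_abs, setIntegral_indicator measurableSet_Ioi, Ioi_inter_Ioi,
          max_eq_right (sqrt_nonneg t)]

section Probability

variable {Ω : Type*} [MeasurableSpace Ω] {μ : Measure Ω} [IsProbabilityMeasure μ]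
  {Z : ℕ → Ω → ℝ}

lemma map_eq_pi_gaussianReal (hmeas : ∀ i, Measurable (Z i)) (hindep : iIndepFun Z μ)
    (hdist : ∀ i, μ.map (Z i) = gaussianReal 0 1) (p : ℕ) :
    μ.map (fun ω (i : Fin p) => Z i ω) = Measure.pi fun _ => gaussianReal 0 1 := by
  rw [(iIndepFun_iff_map_fun_eq_pi_map (f := fun i : Fin p => Z i)
    fun i => (hmeas i).aemeasurable).1 (hindep.precomp Fin.val_injective)]
  simp [hdist]

lemma toReal_measure_lt_V1_mul_sub_V2 (hmeas : ∀ i, Measurable (Z i)) (hindep : iIndepFun Z μ)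
    (hdist : ∀ i, μ.map (Z i) = gaussianReal 0 1) {t : ℝ} (ht : 0 ≤ t) (n : ℕ) :
    (μ {ω | t < V1 (n + 1) (fun i => Z i ω) *
        (V1 (n + 1) (fun i => Z i ω) - V2 (n + 1) (fun i => Z i ω))}).toReal
      = ∫ v in Ioi √t, (n + 1) * halfNormalCDF (gapThreshold t v) ^ n * (2 * φ v) := by
  set B : Fin (n + 1) → Set (Fin (n + 1) → ℝ) :=
    fun i => {y | √t < |y i| ∧ ∀ j, j ≠ i → |y j| < gapThreshold t |y i|}
  have hX : Measurable fun ω (i : Fin (n + 1)) => Z i ω :=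
    measurable_pi_lambda _ fun i => hmeas i
  have hB : ∀ i, MeasurableSet (B i) := fun i => by
    simp only [B]
    measurability
  have hdisj : Pairwise (Function.onFun Disjoint B) := fun i k hik => by
    refine Set.disjoint_left.2 fun y hi hk => ?_
    have := gapThreshold_le ht ((sqrt_nonneg t).trans_lt hi.1)
    have := gapThreshold_le ht ((sqrt_nonneg t).trans_lt hk.1)
    linarith [hi.2 k hik.symm, hk.2 i hik]
  have hevent : {ω | t < V1 (n + 1) (fun i => Z i ω) *
      (V1 (n + 1) (fun i => Z i ω) - V2 (n + 1) (fun i => Z i ω))}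
        = (fun ω (i : Fin (n + 1)) => Z i ω) ⁻¹' ⋃ i, B i := by
    ext ω
    simp [B, lt_V1_mul_sub_V2_iff ht]
  rw [hevent, ← Measure.map_apply hX (.iUnion hB), map_eq_pi_gaussianReal hmeas hindep hdist,
    measure_iUnion hdisj hB, tsum_fintype]
  have hI : 0 ≤ ∫ v in Ioi √t, halfNormalCDF (gapThreshold t v) ^ n * φ v :=
    setIntegral_nonneg measurableSet_Ioi fun v hv =>
      mul_nonneg (pow_nonneg (halfNormalCDF_nonneg (gapThreshold_pos hv).le) n)
        (gaussianPDFReal_nonneg 0 1 v)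
  have hintegrand : ∀ v, (n + 1 : ℝ) * halfNormalCDF (gapThreshold t v) ^ n * (2 * φ v)
      = 2 * (n + 1) * (halfNormalCDF (gapThreshold t v) ^ n * φ v) := fun v => by ring
  simp only [B, pi_gaussianReal_setOf_lt_gapThreshold, Finset.sum_const, Finset.card_univ,
    Fintype.card_fin, nsmul_eq_mul, ENNReal.toReal_mul, ENNReal.toReal_natCast,
    ENNReal.toReal_ofReal (mul_nonneg zero_le_two hI), hintegrand, integral_const_mul]
  push_cast
  ring

end Probability

/-- For i.i.d. standard normals, the covariance test statistic `T₁(p) = V₁(p)(V₁(p) − V₂(p))`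
converges in distribution to the standard exponential distribution: for every `t ≥ 0`,
`ℙ(V₁(p)(V₁(p) − V₂(p)) > t) → e^{−t}`. -/
theorem stmt8 {Ω : Type*} [MeasurableSpace Ω] (μ : Measure Ω) [IsProbabilityMeasure μ]
    (Z : ℕ → Ω → ℝ) (hmeas : ∀ i, Measurable (Z i))
    (hindep : iIndepFun Z μ)
    (hdist : ∀ i, μ.map (Z i) = gaussianReal 0 1)
    (t : ℝ) (ht : 0 ≤ t) :
    Tendsto
      (fun p : ℕ =>
        (μ {ω | t < V1 p (fun i => Z i ω) *
            (V1 p (fun i => Z i ω) - V2 p (fun i => Z i ω))}).toReal)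
      atTop (nhds (Real.exp (-t))) := by
  refine ((tendsto_integral_halfNormalCDF_pow ht).comp (tendsto_sub_atTop_nat 1)).congr' ?_
  filter_upwards [eventually_ge_atTop 1] with p hp
  obtain ⟨n, rfl⟩ := Nat.exists_eq_add_of_le' hp
  exact (toReal_measure_lt_V1_mul_sub_V2 hmeas hindep hdist ht n).symm
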